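/- Let R be a commutative ring and M an R-module such that the functor Q ↦ M ⊗_R Q is naturally isomorphic to a directed colimit of functors Q ↦ Hom_R(N_i, Q) where all transition natural transformations Hom_R(N_i, −) → Hom_R(N_j, −) are induced by surjections N_j → N_i of R-modules. Then M is a flat Mittag-Leffler module, i.e., M is flat and M ⊗_R ∏_k Q_k → ∏_k (M ⊗_R Q_k) is injective for every family (Q_k) of R-modules. -/

import Mathlib

universe u

open TensorProduct

/-- `M` is a Mittag-Leffler module: for every family of `R`-modules `(Q k)`, the canonical map
`M ⊗ (∏ k, Q k) → ∏ k, (M ⊗ Q k)` is injective. -/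
def IsMittagLeffler (R : Type u) [CommRing R]
    (M : Type u) [AddCommGroup M] [Module R M] : Prop :=
  ∀ (κ : Type u) (Q : κ → Type u) [∀ k, AddCommGroup (Q k)] [∀ k, Module R (Q k)],
    Function.Injective (TensorProduct.piRightHom R R M Q)

/-!
Every element of `M ⊗ Q` is `u Q i φ` for some `φ : N i → Q`, and `u Q i φ = 0` forces `φ = 0`:
by injectivity of the colimit `φ ∘ t i k = 0` for some `k ≥ i`, and `t i k` is surjective.
Naturality then turns `(M ⊗ g) (u Q i φ) = u Q' i (g ∘ φ)`, so whenever a family of maps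
`g k : Q → P k` is jointly injective, so is the family `M ⊗ g k`. A single injective map gives
flatness, the projections out of a product give the Mittag-Leffler condition.
-/

theorem TensorProduct.piRightHom_apply_eq_lTensor_proj {R : Type*} [CommRing R]
    {M : Type*} [AddCommGroup M] [Module R M] {κ : Type*} {P : κ → Type*}
    [∀ k, AddCommGroup (P k)] [∀ k, Module R (P k)] (x : M ⊗[R] (∀ k, P k)) (k : κ) :
    piRightHom R R M P x k = (LinearMap.proj k : (∀ k, P k) →ₗ[R] P k).lTensor M x := by
  induction x using TensorProduct.induction_on with
  | zero => simp
  | tmul m q => simp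
  | add x y hx hy => simp [hx, hy]

section TensorColimitHom

variable {R : Type u} [CommRing R] {M : Type u} [AddCommGroup M] [Module R M]
  {ι : Type u} {N : ι → Type u} [∀ i, AddCommGroup (N i)] [∀ i, Module R (N i)]
  {u : ∀ (Q : Type u) [AddCommGroup Q] [Module R Q] (i : ι), (N i →ₗ[R] Q) →ₗ[R] M ⊗[R] Q}

theorem eq_zero_of_colimit_hom_eq_zero_of_surjective [Preorder ι]
    (t : ∀ i j, i ≤ j → (N j →ₗ[R] N i))
    (ht_surj : ∀ i j (h : i ≤ j), Function.Surjective (t i j h))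
    (hinj : ∀ (Q : Type u) [AddCommGroup Q] [Module R Q]
      (i j : ι) (φ : N i →ₗ[R] Q) (ψ : N j →ₗ[R] Q), u Q i φ = u Q j ψ →
      ∃ (k : ι) (hik : i ≤ k) (hjk : j ≤ k), φ.comp (t i k hik) = ψ.comp (t j k hjk))
    {Q : Type u} [AddCommGroup Q] [Module R Q] {i : ι} {φ : N i →ₗ[R] Q} (hφ : u Q i φ = 0) :
    φ = 0 := by
  obtain ⟨k, hik, _, hk⟩ := hinj Q i i φ 0 (hφ.trans (map_zero _).symm)
  exact (LinearMap.cancel_right (ht_surj i k hik)).mp hk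

theorem eq_zero_of_forall_lTensor_eq_zero
    (hnat : ∀ (Q Q' : Type u) [AddCommGroup Q] [Module R Q] [AddCommGroup Q'] [Module R Q']
      (g : Q →ₗ[R] Q') (i : ι) (φ : N i →ₗ[R] Q), u Q' i (g.comp φ) = g.lTensor M (u Q i φ))
    (hsurj : ∀ (Q : Type u) [AddCommGroup Q] [Module R Q] (x : M ⊗[R] Q),
      ∃ (i : ι) (φ : N i →ₗ[R] Q), u Q i φ = x)
    (hker : ∀ (Q : Type u) [AddCommGroup Q] [Module R Q] (i : ι) (φ : N i →ₗ[R] Q),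
      u Q i φ = 0 → φ = 0)
    {κ : Type*} {Q : Type u} [AddCommGroup Q] [Module R Q] {P : κ → Type u}
    [∀ k, AddCommGroup (P k)] [∀ k, Module R (P k)] (g : ∀ k, Q →ₗ[R] P k)
    (hg : ∀ q, (∀ k, g k q = 0) → q = 0) {x : M ⊗[R] Q} (hx : ∀ k, (g k).lTensor M x = 0) :
    x = 0 := by
  obtain ⟨i, φ, rfl⟩ := hsurj Q x
  have hgφ : ∀ k, (g k).comp φ = 0 := fun k ↦ hker _ i _ (by rw [hnat]; exact hx k)
  have hφ : φ = 0 := LinearMap.ext fun y ↦ hg (φ y) fun k ↦ LinearMap.congr_fun (hgφ k) y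
  rw [hφ, map_zero]

end TensorColimitHom

theorem flat_mittagLeffler_of_tensor_iso_colimit_hom_of_surjective_general
    (R : Type u) [CommRing R]
    (M : Type u) [AddCommGroup M] [Module R M]
    (ι : Type u) [Preorder ι]
    (N : ι → Type u) [∀ i, AddCommGroup (N i)] [∀ i, Module R (N i)]
    -- the inverse system of transition maps `N j → N i` for `i ≤ j`
    (t : ∀ i j, i ≤ j → (N j →ₗ[R] N i))
    -- the transition maps are surjective
    (ht_surj : ∀ i j (h : i ≤ j), Function.Surjective (t i j h))
    -- the cocone maps `Hom(N i, Q) → M ⊗ Q`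
    (u : ∀ (Q : Type u) [AddCommGroup Q] [Module R Q] (i : ι),
      (N i →ₗ[R] Q) →ₗ[R] M ⊗[R] Q)
    -- naturality in `Q`
    (hnat : ∀ (Q Q' : Type u) [AddCommGroup Q] [Module R Q]
      [AddCommGroup Q'] [Module R Q'] (g : Q →ₗ[R] Q') (i : ι) (φ : N i →ₗ[R] Q),
      u Q' i (g.comp φ) = LinearMap.lTensor M g (u Q i φ))
    -- the induced map from the colimit is surjective …
    (hsurj : ∀ (Q : Type u) [AddCommGroup Q] [Module R Q] (x : M ⊗[R] Q),
      ∃ (i : ι) (φ : N i →ₗ[R] Q), u Q i φ = x)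
    -- … and injective
    (hinj : ∀ (Q : Type u) [AddCommGroup Q] [Module R Q]
      (i j : ι) (φ : N i →ₗ[R] Q) (ψ : N j →ₗ[R] Q), u Q i φ = u Q j ψ →
      ∃ (k : ι) (hik : i ≤ k) (hjk : j ≤ k),
        φ.comp (t i k hik) = ψ.comp (t j k hjk)) :
    Module.Flat R M ∧ IsMittagLeffler R M := by
  have hker : ∀ (Q : Type u) [AddCommGroup Q] [Module R Q] (i : ι) (φ : N i →ₗ[R] Q),
      u Q i φ = 0 → φ = 0 :=
    fun _ _ _ _ _ ↦ eq_zero_of_colimit_hom_eq_zero_of_surjective t ht_surj hinj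
  refine ⟨Module.Flat.iff_lTensor_preserves_injective_linearMap'.mpr ?_, ?_⟩
  · intro Q Q' _ _ _ _ f hf
    refine (injective_iff_map_eq_zero _).mpr fun x hx ↦ ?_
    exact eq_zero_of_forall_lTensor_eq_zero hnat hsurj hker (κ := Unit) (fun _ ↦ f)
      (fun q hq ↦ (injective_iff_map_eq_zero f).mp hf q (hq ())) fun _ ↦ hx
  · intro κ P _ _
    refine (injective_iff_map_eq_zero _).mpr fun x hx ↦ ?_
    exact eq_zero_of_forall_lTensor_eq_zero hnat hsurj hker LinearMap.proj
      (fun q hq ↦ funext hq) fun k ↦ by rw [← piRightHom_apply_eq_lTensor_proj, hx, Pi.zero_apply]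

/-- If the functor `Q ↦ M ⊗ Q` is naturally isomorphic to a directed colimit of the functors
`Q ↦ Hom(N i, Q)`, where the transition natural transformations are induced by *surjections*
`N j → N i` of an inverse system, then `M` is a flat Mittag-Leffler module. -/
theorem flat_mittagLeffler_of_tensor_iso_colimit_hom_of_surjective
    (R : Type u) [CommRing R]
    (M : Type u) [AddCommGroup M] [Module R M]
    (ι : Type u) [Preorder ι] [IsDirected ι (· ≤ ·)] [Nonempty ι]
    (N : ι → Type u) [∀ i, AddCommGroup (N i)] [∀ i, Module R (N i)]
    -- the inverse system of transition maps `N j → N i` for `i ≤ j`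
    (t : ∀ i j, i ≤ j → (N j →ₗ[R] N i))
    (ht_self : ∀ i (x : N i), t i i le_rfl x = x)
    (ht_comp : ∀ i j k (hij : i ≤ j) (hjk : j ≤ k) (x : N k),
      t i j hij (t j k hjk x) = t i k (hij.trans hjk) x)
    -- the transition maps are surjective
    (ht_surj : ∀ i j (h : i ≤ j), Function.Surjective (t i j h))
    -- the cocone maps `Hom(N i, Q) → M ⊗ Q`
    (u : ∀ (Q : Type u) [AddCommGroup Q] [Module R Q] (i : ι),
      (N i →ₗ[R] Q) →ₗ[R] M ⊗[R] Q)
    -- compatibility with the transition maps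
    (hcompat : ∀ (Q : Type u) [AddCommGroup Q] [Module R Q]
      (i j : ι) (h : i ≤ j) (φ : N i →ₗ[R] Q),
      u Q j (φ.comp (t i j h)) = u Q i φ)
    -- naturality in `Q`
    (hnat : ∀ (Q Q' : Type u) [AddCommGroup Q] [Module R Q]
      [AddCommGroup Q'] [Module R Q'] (g : Q →ₗ[R] Q') (i : ι) (φ : N i →ₗ[R] Q),
      u Q' i (g.comp φ) = LinearMap.lTensor M g (u Q i φ))
    -- the induced map from the colimit is surjective …
    (hsurj : ∀ (Q : Type u) [AddCommGroup Q] [Module R Q] (x : M ⊗[R] Q),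
      ∃ (i : ι) (φ : N i →ₗ[R] Q), u Q i φ = x)
    -- … and injective
    (hinj : ∀ (Q : Type u) [AddCommGroup Q] [Module R Q]
      (i j : ι) (φ : N i →ₗ[R] Q) (ψ : N j →ₗ[R] Q), u Q i φ = u Q j ψ →
      ∃ (k : ι) (hik : i ≤ k) (hjk : j ≤ k),
        φ.comp (t i k hik) = ψ.comp (t j k hjk)) :
    Module.Flat R M ∧ IsMittagLeffler R M :=
  flat_mittagLeffler_of_tensor_iso_colimit_hom_of_surjective_general R M ι N t ht_surj u hnat hsurj
    hinj
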